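/- arXiv:2512.12535 — 4 statements merged into one kernel-verified Lean document; each statement's English description precedes it below -/
import Mathlib

section
/- Let φ : ℤ_p → ℂ_p be continuous. For each n ≥ 0 define T_n(φ)(x,y) = ∑_{k=0}^n (-1)^k k! · (y choose k) · (x choose k) · φ(x - k). Then for all m ≥ n and all x, y ∈ ℤ_p, |T_m(φ)(x,y) − T_n(φ)(x,y)| ≤ |(n+1)!|_p · ‖φ‖, and consequently the T_n converge uniformly to a continuous function T(φ) : ℤ_p × ℤ_p → ℂ_p given by T(φ)(x,y) = ∑_{k=0}^∞ (-1)^k k! (y choose k)(x choose k) φ(x-k). -/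
/-! Identifying `(x choose k) = x(x-1)⋯(x-k+1)/k!` with the binomial coefficient of the
binomial ring `ℤ_p` shows `|(x choose k)| ≤ 1`, so the `k`-th term of `T(φ)` has sup norm at most
`|k!| ‖φ‖`. Since `|k!|` is non-increasing and tends to `0`, the ultrametric inequality bounds
every tail `T_m(φ) - T_n(φ)` by `|(n+1)!| ‖φ‖`, and the series of terms converges in the complete
nonarchimedean space `C(ℤ_p × ℤ_p, ℂ_p)`; convergence there is uniform convergence. -/

open Finset Filter

/-- `(x choose k)` on `ℤ_p`, valued in a normed `ℚ_p`-algebra `K` (modelling `ℂ_p`). -/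
noncomputable def padicBinom (p : ℕ) [Fact p.Prime] (K : Type*) [NormedField K]
    [NormedAlgebra ℚ_[p] K] (x : ℤ_[p]) (k : ℕ) : K :=
  algebraMap ℚ_[p] K ((∏ i ∈ Finset.range k, ((x : ℚ_[p]) - (i : ℚ_[p]))) / (k.factorial : ℚ_[p]))

/-- Partial sums `T_n(φ)(x,y) = ∑_{k=0}^n (-1)^k k! (y choose k)(x choose k) φ(x-k)`. -/
noncomputable def twoVarPartial (p : ℕ) [Fact p.Prime] {K : Type*} [NormedField K]
    [NormedAlgebra ℚ_[p] K] (φ : ℤ_[p] → K) (n : ℕ) (x y : ℤ_[p]) : K :=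
  ∑ k ∈ Finset.range (n + 1),
    (-1 : K) ^ k * (k.factorial : K) * padicBinom p K y k * padicBinom p K x k * φ (x - (k : ℤ_[p]))

open Topology

theorem Ring.prod_range_sub_eq_factorial_mul_choose {R : Type*} [CommRing R] [BinomialRing R]
    (r : R) (k : ℕ) : ∏ i ∈ range k, (r - i) = k.factorial * Ring.choose r k := by
  rw [← descPochhammer_eval_eq_prod_range, ← descPochhammer_map (algebraMap ℤ R),
    Polynomial.eval_map, ← Polynomial.aeval_def, Polynomial.aeval_eq_smeval,
    Ring.descPochhammer_eq_factorial_smul_choose, nsmul_eq_mul]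

variable {p : ℕ} [Fact p.Prime]

namespace PadicInt

theorem norm_natCast_le_of_dvd {a b : ℕ} (h : a ∣ b) : ‖(b : ℤ_[p])‖ ≤ ‖(a : ℤ_[p])‖ := by
  obtain ⟨c, rfl⟩ := h
  rw [Nat.cast_mul, norm_mul]
  exact mul_le_of_le_one_right (norm_nonneg _) (norm_le_one _)

theorem norm_natCast_factorial_antitone : Antitone fun n : ℕ => ‖(n.factorial : ℤ_[p])‖ :=
  fun _ _ h => norm_natCast_le_of_dvd (Nat.factorial_dvd_factorial h)

theorem tendsto_norm_natCast_factorial :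
    Tendsto (fun n : ℕ => ‖(n.factorial : ℤ_[p])‖) atTop (𝓝 0) := by
  have hp := (Fact.out : p.Prime)
  refine tendsto_order.2 ⟨fun a ha => .of_forall fun n => ha.trans_le (norm_nonneg _),
    fun ε hε => ?_⟩
  obtain ⟨m, hm⟩ := exists_pow_lt_of_lt_one hε (inv_lt_one_of_one_lt₀ (mod_cast hp.one_lt) :
    (p : ℝ)⁻¹ < 1)
  filter_upwards [eventually_ge_atTop (p ^ m)] with n hn
  calc ‖(n.factorial : ℤ_[p])‖ ≤ ‖((p ^ m : ℕ) : ℤ_[p])‖ :=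
        norm_natCast_le_of_dvd (Nat.dvd_factorial (pow_pos hp.pos m) hn)
    _ = (p : ℝ)⁻¹ ^ m := by rw [Nat.cast_pow, norm_pow, norm_p]
    _ < ε := hm

end PadicInt

section Transform

variable {K : Type*} [NormedField K] [NormedAlgebra ℚ_[p] K]

variable (K) in
theorem norm_natCast_eq_norm_padicInt (n : ℕ) : ‖(n : K)‖ = ‖(n : ℤ_[p])‖ := by
  rw [← map_natCast (algebraMap ℚ_[p] K), norm_algebraMap', PadicInt.norm_def, PadicInt.coe_natCast]

variable (K) in
theorem padicBinom_eq_algebraMap_choose (x : ℤ_[p]) (k : ℕ) :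
    padicBinom p K x k = algebraMap ℚ_[p] K (Ring.choose x k : ℤ_[p]) := by
  have h := congrArg PadicInt.Coe.ringHom (Ring.prod_range_sub_eq_factorial_mul_choose x k)
  simp only [map_prod, map_sub, map_mul, map_natCast] at h
  exact congrArg (algebraMap ℚ_[p] K)
    (div_eq_of_eq_mul (mod_cast k.factorial_ne_zero) (h.trans (mul_comm _ _)))

theorem norm_padicBinom_le_one (x : ℤ_[p]) (k : ℕ) : ‖padicBinom p K x k‖ ≤ 1 := by
  rw [padicBinom_eq_algebraMap_choose, norm_algebraMap', ← PadicInt.norm_def]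
  exact PadicInt.norm_le_one _

variable (K) in
@[fun_prop]
theorem continuous_padicBinom (k : ℕ) : Continuous fun x : ℤ_[p] => padicBinom p K x k := by
  simp_rw [padicBinom_eq_algebraMap_choose]
  fun_prop

noncomputable def twoVarTerm (φ : C(ℤ_[p], K)) (k : ℕ) : C(ℤ_[p] × ℤ_[p], K) where
  toFun q := (-1 : K) ^ k * (k.factorial : K) * padicBinom p K q.2 k * padicBinom p K q.1 k *
    φ (q.1 - k)
  continuous_toFun := by fun_prop

theorem twoVarPartial_eq_sum_twoVarTerm (φ : C(ℤ_[p], K)) (n : ℕ) (x y : ℤ_[p]) :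
    twoVarPartial p φ n x y = ∑ k ∈ range (n + 1), twoVarTerm φ k (x, y) :=
  rfl

theorem norm_twoVarTerm_apply_le (φ : C(ℤ_[p], K)) (k : ℕ) (q : ℤ_[p] × ℤ_[p]) :
    ‖twoVarTerm φ k q‖ ≤ ‖(k.factorial : K)‖ * ‖φ‖ := by
  calc ‖twoVarTerm φ k q‖
      = ‖(k.factorial : K)‖ * ‖padicBinom p K q.2 k‖ * ‖padicBinom p K q.1 k‖ *
          ‖φ (q.1 - k)‖ := by
        simp only [twoVarTerm, ContinuousMap.coe_mk, norm_mul, norm_pow, norm_neg, norm_one,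
          one_pow, one_mul]
    _ ≤ ‖(k.factorial : K)‖ * 1 * 1 * ‖φ‖ := by
        gcongr
        exacts [norm_padicBinom_le_one _ _, norm_padicBinom_le_one _ _, φ.norm_coe_le_norm _]
    _ = ‖(k.factorial : K)‖ * ‖φ‖ := by rw [mul_one, mul_one]

theorem norm_twoVarTerm_le (φ : C(ℤ_[p], K)) (k : ℕ) :
    ‖twoVarTerm φ k‖ ≤ ‖(k.factorial : K)‖ * ‖φ‖ :=
  (ContinuousMap.norm_le _ (by positivity)).2 (norm_twoVarTerm_apply_le φ k)

variable [IsUltrametricDist K]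

theorem norm_twoVarPartial_sub_le (φ : C(ℤ_[p], K)) {m n : ℕ} (h : n ≤ m) (x y : ℤ_[p]) :
    ‖twoVarPartial p φ m x y - twoVarPartial p φ n x y‖ ≤ ‖((n + 1).factorial : K)‖ * ‖φ‖ := by
  rw [twoVarPartial_eq_sum_twoVarTerm, twoVarPartial_eq_sum_twoVarTerm,
    ← sum_Ico_eq_sub _ (Nat.succ_le_succ h)]
  refine IsUltrametricDist.norm_sum_le_of_forall_le_of_nonneg (by positivity) fun k hk => ?_
  refine (norm_twoVarTerm_apply_le φ k _).trans (mul_le_mul_of_nonneg_right ?_ (norm_nonneg _))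
  simp only [norm_natCast_eq_norm_padicInt K (p := p)]
  exact PadicInt.norm_natCast_factorial_antitone (mem_Ico.1 hk).1

theorem summable_twoVarTerm [CompleteSpace K] (φ : C(ℤ_[p], K)) : Summable (twoVarTerm φ) := by
  refine NonarchimedeanAddGroup.summable_of_tendsto_cofinite_zero ?_
  rw [Nat.cofinite_eq_atTop, tendsto_zero_iff_norm_tendsto_zero]
  refine squeeze_zero (fun _ => norm_nonneg _) (norm_twoVarTerm_le φ) ?_
  simpa only [norm_natCast_eq_norm_padicInt K (p := p), zero_mul] using
    PadicInt.tendsto_norm_natCast_factorial.mul_const ‖φ‖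

end Transform

/-- For continuous `φ : ℤ_p → ℂ_p`: the partial sums `T_n(φ)` satisfy
`‖T_m(φ)(x,y) − T_n(φ)(x,y)‖ ≤ |(n+1)!| ‖φ‖` for `m ≥ n`, and hence converge uniformly to a
continuous function `T(φ) : ℤ_p × ℤ_p → ℂ_p` given pointwise by the full series. -/
theorem twoVar_transform_partial_bound_and_unif_conv (p : ℕ) [Fact p.Prime] (K : Type*)
    [NontriviallyNormedField K] [NormedAlgebra ℚ_[p] K] [IsUltrametricDist K] [CompleteSpace K]
    (φ : C(ℤ_[p], K)) :
    (∀ m n : ℕ, n ≤ m → ∀ x y : ℤ_[p],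
      ‖twoVarPartial p (⇑φ) m x y - twoVarPartial p (⇑φ) n x y‖ ≤
        ‖(((n + 1).factorial : ℕ) : K)‖ * ‖φ‖) ∧
    ∃ T : C(ℤ_[p] × ℤ_[p], K),
      TendstoUniformly (fun n (q : ℤ_[p] × ℤ_[p]) => twoVarPartial p (⇑φ) n q.1 q.2) (⇑T) atTop ∧
      ∀ x y : ℤ_[p], HasSum
        (fun k : ℕ => (-1 : K) ^ k * (k.factorial : K) * padicBinom p K y k * padicBinom p K x k *
          φ (x - (k : ℤ_[p]))) (T (x, y)) := by
  have hT := (summable_twoVarTerm φ).hasSum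
  refine ⟨fun m n h x y => norm_twoVarPartial_sub_le φ h x y, ∑' k, twoVarTerm φ k, ?_,
    fun x y => ?_⟩
  · have hpartial := hT.tendsto_sum_nat.comp (tendsto_add_atTop_nat 1)
    simpa only [Function.comp_def, ContinuousMap.coe_sum, Finset.sum_apply,
      twoVarPartial_eq_sum_twoVarTerm] using ContinuousMap.tendsto_iff_tendstoUniformly.1 hpartial
  · exact hT.map (ContinuousMap.evalCLM K (x, y)) (ContinuousMap.evalCLM K (x, y)).continuous
end

section
/- For every continuous φ : ℤ_p → ℂ_p and every y ∈ ℤ_p, the formal power series identity (1 − t)^y · ∑_{n≥0} φ(n) tⁿ/n! = ∑_{n≥0} S^y(φ)(n) tⁿ/n! holds, where S^y(φ)(x) = ∑_{k=0}^∞ (-1)^k k! (y choose k)(x choose k) φ(x-k). -/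
open Finset

/-- The operator `S^y`, `S^y(φ)(x) = ∑_{k≥0} (-1)^k k! (y choose k)(x choose k) φ(x-k)`. -/
noncomputable def Sop (p : ℕ) [Fact p.Prime] {K : Type*} [NormedField K]
    [NormedAlgebra ℚ_[p] K] (y : ℤ_[p]) (φ : ℤ_[p] → K) : ℤ_[p] → K :=
  fun x => ∑' k : ℕ,
    (-1 : K) ^ k * (k.factorial : K) * padicBinom p K y k * padicBinom p K x k * φ (x - (k : ℤ_[p]))

lemma padicBinom_natCast (p : ℕ) [Fact p.Prime] (K : Type*) [NormedField K]
    [NormedAlgebra ℚ_[p] K] (n k : ℕ) :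
    padicBinom p K (n : ℤ_[p]) k = (n.choose k : K) := by
  have hprod : ∏ i ∈ range k, ((n : ℚ_[p]) - (i : ℚ_[p])) = n.descFactorial k := by
    rw [← descPochhammer_eval_eq_prod_range, descPochhammer_eval_eq_descFactorial]
  rw [padicBinom, PadicInt.coe_natCast, hprod, Nat.descFactorial_eq_factorial_mul_choose,
    Nat.cast_mul, mul_div_cancel_left₀ _ (Nat.cast_ne_zero.mpr k.factorial_ne_zero), map_natCast]

/-- The series truncates because `(n choose k)` vanishes for `k > n`. -/
lemma Sop_natCast (p : ℕ) [Fact p.Prime] {K : Type*} [NormedField K] [NormedAlgebra ℚ_[p] K]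
    (y : ℤ_[p]) (φ : ℤ_[p] → K) (n : ℕ) :
    Sop p y φ n = ∑ k ∈ range (n + 1),
      (-1 : K) ^ k * (k.factorial : K) * padicBinom p K y k * (n.choose k : K) *
        φ ((n - k : ℕ) : ℤ_[p]) := by
  rw [Sop, tsum_eq_sum (s := range (n + 1))]
  · refine sum_congr rfl fun k hk => ?_
    rw [padicBinom_natCast, Nat.cast_sub (Nat.lt_succ_iff.mp (mem_range.mp hk))]
  · intro k hk
    rw [padicBinom_natCast, Nat.choose_eq_zero_of_lt (by simpa using hk)]
    simp

lemma factorial_mul_choose_div_factorial {K : Type*} [Field K] [CharZero K] {n k : ℕ}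
    (hk : k ≤ n) :
    (k.factorial : K) * (n.choose k : K) / (n.factorial : K) = 1 / ((n - k).factorial : K) := by
  have hk_fac : (k.factorial : K) ≠ 0 := Nat.cast_ne_zero.mpr k.factorial_ne_zero
  have hn_fac : (n.factorial : K) ≠ 0 := Nat.cast_ne_zero.mpr n.factorial_ne_zero
  rw [Nat.cast_choose K hk]
  field_simp

theorem one_sub_X_pow_mul_egf_general (p : ℕ) [Fact p.Prime] (K : Type*) [NontriviallyNormedField K]
    [NormedAlgebra ℚ_[p] K]
    (y : ℤ_[p]) (φ : ℤ_[p] → K) :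
    PowerSeries.mk (fun n => (-1 : K) ^ n * padicBinom p K y n) *
        PowerSeries.mk (fun n => φ (n : ℕ) / (n.factorial : K)) =
      PowerSeries.mk (fun n => Sop p y φ (n : ℕ) / (n.factorial : K)) := by
  have : CharZero K := charZero_of_injective_algebraMap (algebraMap ℚ_[p] K).injective
  ext n
  rw [PowerSeries.coeff_mul, Nat.sum_antidiagonal_eq_sum_range_succ_mk, PowerSeries.coeff_mk,
    Sop_natCast, sum_div]
  refine sum_congr rfl fun k hk => ?_
  have hfac := factorial_mul_choose_div_factorial (K := K) (Nat.lt_succ_iff.mp (mem_range.mp hk))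
  simp only [PowerSeries.coeff_mk]
  linear_combination -(-1 : K) ^ k * padicBinom p K y k * φ ((n - k : ℕ) : ℤ_[p]) * hfac

/-- For continuous `φ : ℤ_p → ℂ_p` and `y ∈ ℤ_p`, the formal power series identity
`(1 − t)^y · ∑ φ(n) tⁿ/n! = ∑ S^y(φ)(n) tⁿ/n!` holds, where
`(1 − t)^y = ∑ (-1)ⁿ (y choose n) tⁿ`. -/
theorem one_sub_X_pow_mul_egf (p : ℕ) [Fact p.Prime] (K : Type*) [NontriviallyNormedField K]
    [NormedAlgebra ℚ_[p] K] [IsUltrametricDist K] [CompleteSpace K]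
    (y : ℤ_[p]) (φ : ℤ_[p] → K) (hφ : Continuous φ) :
    PowerSeries.mk (fun n => (-1 : K) ^ n * padicBinom p K y n) *
        PowerSeries.mk (fun n => φ (n : ℕ) / (n.factorial : K)) =
      PowerSeries.mk (fun n => Sop p y φ (n : ℕ) / (n.factorial : K)) :=
  one_sub_X_pow_mul_egf_general p K y φ
end

section
/- For all y, z ∈ ℤ_p and all continuous φ : ℤ_p → ℂ_p, one has S^{y+z}(φ) = S^y(S^z(φ)). -/
/-!
Write `S^y(φ)(x) = ∑ₖ c_k(y, x) φ(x - k)` with `c_k(y, x) = (y choose k) · (-1)^k x^{(k)}`,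
where `x^{(k)} = x(x-1)⋯(x-k+1)` and everything is computed in the binomial ring `ℤ_p`.
The falling factorial is multiplicative, `x^{(j)} (x-j)^{(m)} = x^{(j+m)}`, so the double series
for `S^y(S^z φ)(x)` regroups along `j + m = k` into
`∑_k (∑_{j+m=k} (y choose j)(z choose m)) (-1)^k x^{(k)} φ(x-k)`, and Chu–Vandermonde turns the
inner sum into `(y+z choose k)`. The regrouping is legitimate because `‖x^{(k)}‖ ≤ ‖k!‖ → 0` in
`ℤ_p` and `φ` is bounded, so the double family tends to zero in the complete ultrametric field `K`
and is therefore unconditionally summable.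
-/

open Finset

open Filter Topology Polynomial

theorem Summable.tsum_eq_tsum_sum_antidiagonal {A G : Type*} [AddMonoid A] [HasAntidiagonal A]
    [AddCommGroup G] [UniformSpace G] [IsUniformAddGroup G] [CompleteSpace G] [T0Space G]
    {F : A × A → G} (hF : Summable F) :
    ∑' ij, F ij = ∑' k, ∑ ij ∈ antidiagonal k, F ij := by
  let e := HasAntidiagonal.sigmaAntidiagonalEquivProd (A := A)
  have hFe : Summable fun c => F (e c) := e.summable_iff.mpr hF
  rw [← e.tsum_eq, hFe.tsum_sigma]
  exact tsum_congr fun k => Finset.tsum_subtype (antidiagonal k) F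

theorem tendsto_fst_add_snd_cofinite_atTop :
    Tendsto (fun ij : ℕ × ℕ => ij.1 + ij.2) cofinite atTop := by
  rw [← Nat.cofinite_eq_atTop]
  refine Tendsto.cofinite_of_finite_preimage_singleton fun k => ?_
  have : (fun ij : ℕ × ℕ => ij.1 + ij.2) ⁻¹' {k} = antidiagonal k := by ext; simp
  exact this ▸ (antidiagonal k).finite_toSet

theorem summable_of_norm_le_comp_add {G : Type*} [NormedAddCommGroup G] [IsUltrametricDist G]
    [CompleteSpace G] {F : ℕ × ℕ → G} {g : ℕ → ℝ} (hg : Tendsto g atTop (𝓝 0))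
    (hF : ∀ j m, ‖F (j, m)‖ ≤ g (j + m)) : Summable F :=
  NonarchimedeanAddGroup.summable_of_tendsto_cofinite_zero <|
    squeeze_zero_norm (fun ij => hF ij.1 ij.2) (hg.comp tendsto_fst_add_snd_cofinite_atTop)

namespace Ring

variable {R : Type*} [CommRing R] [BinomialRing R]

theorem factorial_mul_choose_eq_descPochhammer_eval (x : R) (k : ℕ) :
    (k.factorial : R) * choose x k = (descPochhammer R k).eval x := by
  rw [← nsmul_eq_mul, ← descPochhammer_eq_factorial_smul_choose, ← aeval_eq_smeval, aeval_def,
    ← eval_map, descPochhammer_map]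

end Ring

theorem descPochhammer_eval_add {R : Type*} [CommRing R] (x : R) (j m : ℕ) :
    (descPochhammer R (j + m)).eval x =
      (descPochhammer R j).eval x * (descPochhammer R m).eval (x - j) := by
  rw [← descPochhammer_mul, eval_mul, eval_comp]
  simp

namespace PadicInt

variable {p : ℕ} [hp : Fact p.Prime]

theorem norm_factorial_le_pow (n k : ℕ) (hk : p * n ≤ k) :
    ‖(k.factorial : ℤ_[p])‖ ≤ (p : ℝ)⁻¹ ^ n := by
  have hdvd : p ^ n ∣ k.factorial := by
    refine (pow_dvd_of_le_emultiplicity ?_).trans (Nat.factorial_dvd_factorial hk)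
    rw [hp.out.emultiplicity_factorial_mul]
    exact le_add_self
  obtain ⟨c, hc⟩ := hdvd
  rw [hc, Nat.cast_mul, norm_mul, Nat.cast_pow, norm_pow, norm_p]
  exact mul_le_of_le_one_right (by positivity) (norm_le_one _)

theorem tendsto_norm_factorial :
    Tendsto (fun k : ℕ => ‖(k.factorial : ℤ_[p])‖) atTop (𝓝 0) := by
  have hp0 : p ≠ 0 := hp.out.ne_zero
  refine squeeze_zero (fun _ => norm_nonneg _)
    (fun k => norm_factorial_le_pow (k / p) k (Nat.mul_div_le k p)) ?_
  refine (tendsto_pow_atTop_nhds_zero_of_lt_one (by positivity) ?_).comp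
    (Nat.tendsto_div_const_atTop hp0)
  exact inv_lt_one_of_one_lt₀ (by exact_mod_cast hp.out.one_lt)

theorem norm_descPochhammer_eval_le (x : ℤ_[p]) (k : ℕ) :
    ‖(descPochhammer ℤ_[p] k).eval x‖ ≤ ‖(k.factorial : ℤ_[p])‖ := by
  rw [← Ring.factorial_mul_choose_eq_descPochhammer_eval, norm_mul]
  exact mul_le_of_le_one_right (norm_nonneg _) (norm_le_one _)

end PadicInt

section

variable {p : ℕ} [Fact p.Prime] {K : Type*} [NormedField K] [NormedAlgebra ℚ_[p] K]

theorem padicBinom_eq_choose (x : ℤ_[p]) (k : ℕ) :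
    padicBinom p K x k = algebraMap ℚ_[p] K (PadicInt.Coe.ringHom (Ring.choose x k)) := by
  have h := congrArg PadicInt.Coe.ringHom (Ring.factorial_mul_choose_eq_descPochhammer_eval x k)
  simp only [descPochhammer_eval_eq_prod_range, map_mul, map_natCast, map_prod, map_sub] at h
  have hk : (k.factorial : ℚ_[p]) ≠ 0 := by exact_mod_cast k.factorial_ne_zero
  rw [padicBinom]
  congr 1
  rw [div_eq_iff hk, mul_comm]
  exact h.symm

end

namespace Sop

section BinomialRing

variable {R : Type*} [CommRing R] [BinomialRing R]

/-- The coefficient `(-1)^k k! (y choose k) (x choose k)` of `φ (x - k)` in `S^y(φ)(x)`. -/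
noncomputable def coeff (y x : R) (k : ℕ) : R :=
  Ring.choose y k * ((-1) ^ k * (descPochhammer R k).eval x)

theorem coeff_mul_coeff (y z x : R) (j m : ℕ) :
    coeff y x j * coeff z (x - j) m =
      Ring.choose y j * Ring.choose z m * ((-1) ^ (j + m) * (descPochhammer R (j + m)).eval x) := by
  rw [coeff, coeff, descPochhammer_eval_add, pow_add]
  ring

theorem sum_antidiagonal_coeff_mul_coeff (y z x : R) (k : ℕ) :
    ∑ ij ∈ antidiagonal k, coeff y x ij.1 * coeff z (x - ij.1) ij.2 = coeff (y + z) x k := by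
  rw [coeff, Ring.add_choose_eq k (Commute.all y z), sum_mul]
  refine sum_congr rfl fun ij hij => ?_
  rw [coeff_mul_coeff, mem_antidiagonal.mp hij]

end BinomialRing

variable {p : ℕ} [Fact p.Prime]

theorem norm_coeff_mul_coeff_le (y z x : ℤ_[p]) (j m : ℕ) :
    ‖coeff y x j * coeff z (x - j) m‖ ≤ ‖((j + m).factorial : ℤ_[p])‖ := by
  rw [coeff_mul_coeff, norm_mul, norm_mul (_ ^ _), norm_pow, norm_neg, norm_one, one_pow, one_mul]
  exact (mul_le_of_le_one_left (norm_nonneg _) (PadicInt.norm_le_one _)).trans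
    (PadicInt.norm_descPochhammer_eval_le x (j + m))

variable {K : Type*} [NormedField K] [NormedAlgebra ℚ_[p] K]

theorem apply_eq_tsum_coeff (y : ℤ_[p]) (φ : ℤ_[p] → K) (x : ℤ_[p]) :
    Sop p y φ x =
      ∑' k : ℕ, algebraMap ℚ_[p] K (PadicInt.Coe.ringHom (coeff y x k)) * φ (x - k) := by
  refine tsum_congr fun k => ?_
  rw [padicBinom_eq_choose, padicBinom_eq_choose, coeff,
    ← Ring.factorial_mul_choose_eq_descPochhammer_eval]
  simp only [map_mul, map_pow, map_neg, map_one, map_natCast]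
  ring

end Sop

/-- For all `y, z ∈ ℤ_p` and continuous `φ : ℤ_p → ℂ_p`, `S^{y+z}(φ) = S^y(S^z(φ))`. -/
theorem Sop_add (p : ℕ) [Fact p.Prime] (K : Type*) [NontriviallyNormedField K]
    [NormedAlgebra ℚ_[p] K] [IsUltrametricDist K] [CompleteSpace K]
    (y z : ℤ_[p]) (φ : ℤ_[p] → K) (hφ : Continuous φ) :
    Sop p (y + z) φ = Sop p y (Sop p z φ) := by
  funext x
  let ι : ℤ_[p] → K := fun a => algebraMap ℚ_[p] K (PadicInt.Coe.ringHom a)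
  let F : ℕ × ℕ → K := fun jm =>
    ι (Sop.coeff y x jm.1) * (ι (Sop.coeff z (x - jm.1) jm.2) * φ (x - jm.1 - jm.2))
  obtain ⟨C, hC⟩ := (isCompact_range hφ).isBounded.exists_norm_le
  have hbound : Tendsto (fun k : ℕ => ‖(k.factorial : ℤ_[p])‖ * C) atTop (𝓝 0) := by
    simpa using PadicInt.tendsto_norm_factorial.mul_const C
  have hF : Summable F := by
    refine summable_of_norm_le_comp_add hbound fun j m => ?_
    dsimp only [F, ι]
    rw [← mul_assoc, norm_mul, ← map_mul, ← map_mul, norm_algebraMap']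
    exact mul_le_mul (Sop.norm_coeff_mul_coeff_le y z x j m) (hC _ ⟨_, rfl⟩) (norm_nonneg _)
      (norm_nonneg _)
  calc Sop p (y + z) φ x = ∑' k, ∑ jm ∈ antidiagonal k, F jm := by
        rw [Sop.apply_eq_tsum_coeff]
        refine tsum_congr fun k => ?_
        rw [← Sop.sum_antidiagonal_coeff_mul_coeff, map_sum, map_sum, sum_mul]
        refine sum_congr rfl fun jm hjm => ?_
        rw [← mem_antidiagonal.mp hjm, Nat.cast_add, ← sub_sub, map_mul, map_mul, mul_assoc]
    _ = ∑' jm, F jm := hF.tsum_eq_tsum_sum_antidiagonal.symm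
    _ = ∑' j, ∑' m, F (j, m) := hF.tsum_prod
    _ = Sop p y (Sop p z φ) x := by
        rw [Sop.apply_eq_tsum_coeff]
        refine tsum_congr fun j => ?_
        rw [Sop.apply_eq_tsum_coeff, ← tsum_mul_left]
end

section
/- Let σ be the shift operator (σφ)(x) = φ(x+1) on continuous functions ℤ_p → ℂ_p. For every y ∈ ℤ_p, the operator identity S^y ∘ σ = σ ∘ S^y + y·S^{y−1} holds. -/
open Finset

namespace SopShiftAux

open Filter

variable {p : ℕ} [Fact p.Prime]

lemma prod_sub_range_eq_descPochhammer {R : Type*} [CommRing R] (k : ℕ) (x : R) :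
    ∏ i ∈ Finset.range k, (x - (i : R)) = (descPochhammer R k).eval x := by
  induction k with
  | zero => simp
  | succ k ih =>
    rw [Finset.prod_range_succ, ih, descPochhammer_succ_right]
    simp [Polynomial.eval_mul]

lemma norm_padicBinomQ_le (x : ℤ_[p]) (k : ℕ) :
    ‖(∏ i ∈ Finset.range k, ((x : ℚ_[p]) - (i : ℚ_[p]))) / (k.factorial : ℚ_[p])‖ ≤ 1 := by
  have hfac : ((k.factorial : ℚ_[p])) ≠ 0 := Nat.cast_ne_zero.mpr k.factorial_ne_zero
  have hcont : Continuous fun z : ℤ_[p] =>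
      (∏ i ∈ Finset.range k, ((z : ℚ_[p]) - (i : ℚ_[p]))) / (k.factorial : ℚ_[p]) := by
    apply Continuous.div_const
    exact continuous_finset_prod _ fun i _ => (continuous_subtype_val).sub continuous_const
  have hclosed : IsClosed {z : ℤ_[p] |
      ‖(∏ i ∈ Finset.range k, ((z : ℚ_[p]) - (i : ℚ_[p]))) / (k.factorial : ℚ_[p])‖ ≤ 1} :=
    isClosed_le (hcont.norm) continuous_const
  have hsub : Set.range (Nat.cast : ℕ → ℤ_[p]) ⊆ {z : ℤ_[p] |
      ‖(∏ i ∈ Finset.range k, ((z : ℚ_[p]) - (i : ℚ_[p]))) / (k.factorial : ℚ_[p])‖ ≤ 1} := by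
    rintro _ ⟨n, rfl⟩
    have h1 : (∏ i ∈ Finset.range k, (((n : ℤ_[p]) : ℚ_[p]) - (i : ℚ_[p])))
        = ((n.descFactorial k : ℕ) : ℚ_[p]) := by
      rw [PadicInt.coe_natCast, prod_sub_range_eq_descPochhammer,
        descPochhammer_eval_eq_descFactorial]
    simp only [Set.mem_setOf_eq, h1, Nat.descFactorial_eq_factorial_mul_choose, Nat.cast_mul,
      mul_div_assoc, mul_div_cancel_left₀ _ hfac]
    have := Padic.norm_int_le_one (p := p) (n.choose k : ℤ)
    push_cast at this
    exact this
  have hx : x ∈ closure (Set.range (Nat.cast : ℕ → ℤ_[p])) := by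
    rw [PadicInt.denseRange_natCast.closure_eq]; trivial
  exact hclosed.closure_subset_iff.mpr hsub hx

lemma norm_padicBinom_le {K : Type*} [NormedField K] [NormedAlgebra ℚ_[p] K]
    (x : ℤ_[p]) (k : ℕ) : ‖padicBinom p K x k‖ ≤ 1 := by
  rw [padicBinom, norm_algebraMap']
  exact norm_padicBinomQ_le x k

lemma norm_factorial_le (k : ℕ) (hk : p ≤ k) :
    ‖(k.factorial : ℚ_[p])‖ ≤ ((p : ℝ)⁻¹) ^ (k / p) := by
  have hp : p.Prime := Fact.out
  have hdvd : p ^ (k / p) ∣ k.factorial := by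
    rw [Nat.Prime.pow_dvd_factorial_iff hp (Nat.lt_succ_self (Nat.log p k))]
    have h1 : (1 : ℕ) ∈ Finset.Ico 1 (Nat.log p k + 1) := by
      simp only [Finset.mem_Ico]
      constructor
      · exact le_refl 1
      · have := Nat.log_pos hp.one_lt hk
        omega
    calc k / p = k / p ^ 1 := by rw [pow_one]
      _ ≤ ∑ i ∈ Finset.Ico 1 (Nat.log p k + 1), k / p ^ i :=
        Finset.single_le_sum (f := fun i => k / p ^ i) (fun i _ => Nat.zero_le _) h1
  obtain ⟨c, hc⟩ := hdvd
  rw [hc]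
  push_cast
  rw [norm_mul, norm_pow, Padic.norm_p]
  have hnc : ‖((c : ℤ) : ℚ_[p])‖ ≤ 1 := Padic.norm_int_le_one _
  push_cast at hnc
  calc ((p : ℝ)⁻¹) ^ (k / p) * ‖(c : ℚ_[p])‖ ≤ ((p : ℝ)⁻¹) ^ (k / p) * 1 := by
        apply mul_le_mul_of_nonneg_left hnc (by positivity)
    _ = ((p : ℝ)⁻¹) ^ (k / p) := mul_one _

lemma tendsto_norm_factorial :
    Tendsto (fun k : ℕ => ‖(k.factorial : ℚ_[p])‖) atTop (nhds 0) := by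
  have hp : p.Prime := Fact.out
  have hdiv : Tendsto (fun k : ℕ => k / p) atTop atTop := by
    apply tendsto_atTop_atTop.mpr
    intro N
    exact ⟨N * p, fun k hk => (Nat.le_div_iff_mul_le hp.pos).mpr hk⟩
  have hpow : Tendsto (fun k : ℕ => ((p : ℝ)⁻¹) ^ (k / p)) atTop (nhds 0) := by
    have h1 : (0 : ℝ) ≤ (p : ℝ)⁻¹ := by positivity
    have h2 : (p : ℝ)⁻¹ < 1 := by
      rw [inv_lt_one_iff₀]
      right
      exact_mod_cast hp.one_lt
    exact (tendsto_pow_atTop_nhds_zero_of_lt_one h1 h2).comp hdiv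
  apply squeeze_zero' (Eventually.of_forall fun k => norm_nonneg _) ?_ hpow
  filter_upwards [eventually_ge_atTop p] with k hk
  exact norm_factorial_le k hk

variable {K : Type*} [NontriviallyNormedField K] [NormedAlgebra ℚ_[p] K]
  [IsUltrametricDist K] [CompleteSpace K]

lemma summable_term (y x : ℤ_[p]) (ψ : ℕ → K) (M : ℝ) (hψ : ∀ k, ‖ψ k‖ ≤ M) :
    Summable (fun k : ℕ => (-1 : K) ^ k * (k.factorial : K) * padicBinom p K y k *
      padicBinom p K x k * ψ k) := by
  refine NonarchimedeanAddGroup.summable_of_tendsto_cofinite_zero ?_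
  rw [Nat.cofinite_eq_atTop, tendsto_zero_iff_norm_tendsto_zero]
  have hbound : ∀ k : ℕ, ‖(-1 : K) ^ k * (k.factorial : K) * padicBinom p K y k *
      padicBinom p K x k * ψ k‖ ≤ ‖(k.factorial : ℚ_[p])‖ * M := by
    intro k
    have hfK : ((k.factorial : ℕ) : K) = algebraMap ℚ_[p] K ((k.factorial : ℕ) : ℚ_[p]) :=
      (map_natCast (algebraMap ℚ_[p] K) k.factorial).symm
    have hnormfK : ‖((k.factorial : ℕ) : K)‖ = ‖((k.factorial : ℕ) : ℚ_[p])‖ := by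
      rw [hfK, norm_algebraMap']
    simp only [norm_mul, norm_pow, norm_neg, norm_one, one_pow, one_mul, hnormfK]
    have h1 : ‖(k.factorial : ℚ_[p])‖ * ‖padicBinom p K y k‖ * ‖padicBinom p K x k‖
        ≤ ‖(k.factorial : ℚ_[p])‖ := by
      calc ‖(k.factorial : ℚ_[p])‖ * ‖padicBinom p K y k‖ * ‖padicBinom p K x k‖
          ≤ ‖(k.factorial : ℚ_[p])‖ * 1 * 1 := by
            apply mul_le_mul (mul_le_mul_of_nonneg_left (norm_padicBinom_le y k) (norm_nonneg _))
              (norm_padicBinom_le x k) (norm_nonneg _)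
            positivity
        _ = ‖(k.factorial : ℚ_[p])‖ := by ring
    exact mul_le_mul h1 (hψ k) (norm_nonneg _) (norm_nonneg _)
  apply squeeze_zero (fun k => norm_nonneg _) hbound
  have h0 : Tendsto (fun k : ℕ => ‖(k.factorial : ℚ_[p])‖ * M) atTop (nhds (0 * M)) :=
    Tendsto.mul_const M tendsto_norm_factorial
  rwa [zero_mul] at h0

lemma coeff_eq (z w : ℤ_[p]) (k : ℕ) :
    (-1 : K) ^ k * (k.factorial : K) * padicBinom p K z k * padicBinom p K w k
      = algebraMap ℚ_[p] K ((-1 : ℚ_[p]) ^ k * (k.factorial : ℚ_[p]) *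
        ((∏ i ∈ Finset.range k, ((z : ℚ_[p]) - (i : ℚ_[p]))) / (k.factorial : ℚ_[p])) *
        ((∏ i ∈ Finset.range k, ((w : ℚ_[p]) - (i : ℚ_[p]))) / (k.factorial : ℚ_[p]))) := by
  simp only [padicBinom, map_mul, map_pow, map_neg, map_one, map_natCast]

lemma qident (a b : ℚ_[p]) (k : ℕ) :
    (-1 : ℚ_[p]) ^ (k + 1) * ((k + 1).factorial : ℚ_[p]) *
        ((∏ i ∈ Finset.range (k + 1), (b - (i : ℚ_[p]))) / ((k + 1).factorial : ℚ_[p])) *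
        ((∏ i ∈ Finset.range (k + 1), (a - (i : ℚ_[p]))) / ((k + 1).factorial : ℚ_[p]))
      = (-1 : ℚ_[p]) ^ (k + 1) * ((k + 1).factorial : ℚ_[p]) *
        ((∏ i ∈ Finset.range (k + 1), (b - (i : ℚ_[p]))) / ((k + 1).factorial : ℚ_[p])) *
        ((∏ i ∈ Finset.range (k + 1), ((a + 1) - (i : ℚ_[p]))) / ((k + 1).factorial : ℚ_[p]))
      + b * ((-1 : ℚ_[p]) ^ k * (k.factorial : ℚ_[p]) *
        ((∏ i ∈ Finset.range k, ((b - 1) - (i : ℚ_[p]))) / (k.factorial : ℚ_[p])) *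
        ((∏ i ∈ Finset.range k, (a - (i : ℚ_[p]))) / (k.factorial : ℚ_[p]))) := by
  have h1 : ∏ i ∈ Finset.range (k + 1), (b - (i : ℚ_[p]))
      = b * ∏ i ∈ Finset.range k, ((b - 1) - (i : ℚ_[p])) := by
    rw [Finset.prod_range_succ']
    have : ∀ i ∈ Finset.range k, (b - ((i + 1 : ℕ) : ℚ_[p])) = ((b - 1) - (i : ℚ_[p])) := by
      intro i _; push_cast; ring
    rw [Finset.prod_congr rfl this]
    push_cast
    ring
  have h2 : ∏ i ∈ Finset.range (k + 1), (a - (i : ℚ_[p]))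
      = (∏ i ∈ Finset.range k, (a - (i : ℚ_[p]))) * (a - (k : ℚ_[p])) :=
    Finset.prod_range_succ _ _
  have h3 : ∏ i ∈ Finset.range (k + 1), ((a + 1) - (i : ℚ_[p]))
      = (a + 1) * ∏ i ∈ Finset.range k, (a - (i : ℚ_[p])) := by
    rw [Finset.prod_range_succ']
    have : ∀ i ∈ Finset.range k, ((a + 1) - ((i + 1 : ℕ) : ℚ_[p])) = (a - (i : ℚ_[p])) := by
      intro i _; push_cast; ring
    rw [Finset.prod_congr rfl this]
    push_cast
    ring
  have h4 : (((k + 1).factorial : ℕ) : ℚ_[p]) = ((k : ℚ_[p]) + 1) * (k.factorial : ℚ_[p]) := by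
    rw [Nat.factorial_succ]
    push_cast
    ring
  have hk : (k.factorial : ℚ_[p]) ≠ 0 := Nat.cast_ne_zero.mpr k.factorial_ne_zero
  have hk1 : ((k : ℚ_[p]) + 1) ≠ 0 := Nat.cast_add_one_ne_zero k
  rw [h1, h2, h3, h4]
  field_simp
  ring

end SopShiftAux

/-- With `σ` the shift operator `(σφ)(x) = φ(x+1)`, the operator identity
`S^y ∘ σ = σ ∘ S^y + y·S^{y−1}` holds on continuous functions `ℤ_p → ℂ_p`. -/
theorem Sop_comp_shift (p : ℕ) [Fact p.Prime] (K : Type*) [NontriviallyNormedField K]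
    [NormedAlgebra ℚ_[p] K] [IsUltrametricDist K] [CompleteSpace K]
    (y : ℤ_[p]) (φ : ℤ_[p] → K) (hφ : Continuous φ) (x : ℤ_[p]) :
    Sop p y (fun t => φ (t + 1)) x =
      Sop p y φ (x + 1) + algebraMap ℚ_[p] K (y : ℚ_[p]) * Sop p (y - 1) φ x := by
  classical
  obtain ⟨M, hM⟩ : ∃ M : ℝ, ∀ z : ℤ_[p], ‖φ z‖ ≤ M := by
    obtain ⟨C, hC⟩ := isCompact_univ.exists_bound_of_continuousOn hφ.continuousOn
    exact ⟨C, fun z => hC z trivial⟩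
  set F : ℕ → K := fun k =>
    (-1 : K) ^ k * (k.factorial : K) * padicBinom p K y k * padicBinom p K x k *
      φ (x - (k : ℤ_[p]) + 1) with hF_def
  set G : ℕ → K := fun k =>
    (-1 : K) ^ k * (k.factorial : K) * padicBinom p K y k * padicBinom p K (x + 1) k *
      φ (x + 1 - (k : ℤ_[p])) with hG_def
  set H : ℕ → K := fun k =>
    algebraMap ℚ_[p] K (y : ℚ_[p]) * ((-1 : K) ^ k * (k.factorial : K) *
      padicBinom p K (y - 1) k * padicBinom p K x k * φ (x - (k : ℤ_[p]))) with hH_def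
  have hF : Summable F := SopShiftAux.summable_term y x _ M (fun k => hM _)
  have hG : Summable G := SopShiftAux.summable_term y (x + 1) _ M (fun k => hM _)
  have hH0 : Summable (fun k : ℕ => (-1 : K) ^ k * (k.factorial : K) *
      padicBinom p K (y - 1) k * padicBinom p K x k * φ (x - (k : ℤ_[p]))) :=
    SopShiftAux.summable_term (y - 1) x _ M (fun k => hM _)
  have hH : Summable H := hH0.mul_left _
  have hSopL : Sop p y (fun t => φ (t + 1)) x = ∑' k, F k := by
    simp only [Sop, hF_def]
  have hSopR1 : Sop p y φ (x + 1) = ∑' k, G k := by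
    simp only [Sop, hG_def]
  have hSopR2 : algebraMap ℚ_[p] K (y : ℚ_[p]) * Sop p (y - 1) φ x = ∑' k, H k := by
    simp only [Sop, hH_def]
    rw [tsum_mul_left]
  rw [hSopL, hSopR1, hSopR2]
  have hG1 : Summable (fun k : ℕ => G (k + 1)) := (summable_nat_add_iff 1).mpr hG
  have hF0 : F 0 = G 0 := by
    simp [hF_def, hG_def, padicBinom]
  have key : ∀ k : ℕ, F (k + 1) = G (k + 1) + H k := by
    intro k
    have harg1 : x - (((k + 1 : ℕ)) : ℤ_[p]) + 1 = x - (k : ℤ_[p]) := by push_cast; ring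
    have harg2 : x + 1 - (((k + 1 : ℕ)) : ℤ_[p]) = x - (k : ℤ_[p]) := by push_cast; ring
    have hcast1 : (((x + 1 : ℤ_[p])) : ℚ_[p]) = (x : ℚ_[p]) + 1 := by push_cast; ring
    have hcast2 : (((y - 1 : ℤ_[p])) : ℚ_[p]) = (y : ℚ_[p]) - 1 := by push_cast; ring
    simp only [hF_def, hG_def, hH_def, harg1, harg2]
    rw [SopShiftAux.coeff_eq y x (k + 1), SopShiftAux.coeff_eq y (x + 1) (k + 1), SopShiftAux.coeff_eq (y - 1) x k]
    simp only [hcast1, hcast2]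
    rw [← mul_assoc (algebraMap ℚ_[p] K (y : ℚ_[p])), ← map_mul, ← add_mul, ← map_add]
    congr 1
    exact congrArg _ (SopShiftAux.qident (x : ℚ_[p]) (y : ℚ_[p]) k)
  calc ∑' k, F k = F 0 + ∑' k, F (k + 1) := Summable.tsum_eq_zero_add hF
    _ = G 0 + ∑' k, (G (k + 1) + H k) := by rw [hF0, tsum_congr key]
    _ = G 0 + (∑' k, G (k + 1) + ∑' k, H k) := by rw [Summable.tsum_add hG1 hH]
    _ = (G 0 + ∑' k, G (k + 1)) + ∑' k, H k := by ring
    _ = ∑' k, G k + ∑' k, H k := by rw [← Summable.tsum_eq_zero_add hG]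
end
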